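/- arXiv:2104.05073 — 2 statements merged into one kernel-verified Lean document; each statement's English description precedes it below -/
import Mathlib

section
/- Define Owen's T function by T(h,r) = (1/(2π)) ∫_0^r exp(-h²(1+u²)/2)/(1+u²) du. Then for all real η and r ≥ 0, ∫_{-∞}^{η} e^{-t²} erf(r t) dt = -2√π · T(√2·η, r). -/
/-!
Substituting `s = t u` in the definition of `erf` gives
`exp (-t²) erf (r t) = (2/√π) ∫₀ʳ t exp (-(1 + u²) t²) du`. The integrand is dominated by
`|t| exp (-t²)`, so Fubini lets us integrate in `t` first, and `t ↦ t exp (-a t²)` has the explicit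
primitive `-exp (-a t²) / (2a)`. With `a = 1 + u²` this leaves exactly the integrand of
Owen's `T (√2 η, r)`.
-/

open MeasureTheory intervalIntegral

/-- The error function. -/
noncomputable def erf (z : ℝ) : ℝ :=
  (2 / Real.sqrt Real.pi) * ∫ t in (0 : ℝ)..z, Real.exp (-t ^ 2)

/-- Owen's T function. -/
noncomputable def owenT (h r : ℝ) : ℝ :=
  (1 / (2 * Real.pi)) * ∫ u in (0 : ℝ)..r,
    Real.exp (-h ^ 2 * (1 + u ^ 2) / 2) / (1 + u ^ 2)

open Real Set Filter

lemma integral_Iic_mul_exp_neg_mul_sq {a : ℝ} (ha : 0 < a) (η : ℝ) :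
    ∫ t in Iic η, t * exp (-a * t ^ 2) = -exp (-a * η ^ 2) / (2 * a) := by
  have hderiv (x : ℝ) :
      HasDerivAt (fun t ↦ -exp (-a * t ^ 2) / (2 * a)) (x * exp (-a * x ^ 2)) x := by
    refine (((hasDerivAt_pow 2 x).const_mul (-a)).exp.neg.div_const (2 * a)).congr_deriv ?_
    field_simp
    ring
  have hsq : Tendsto (fun t : ℝ ↦ -a * t ^ 2) atBot atBot := by
    have : Tendsto (fun t : ℝ ↦ t ^ 2) atBot atTop := by
      simpa [pow_two] using tendsto_id.atBot_mul_atBot₀ (tendsto_id (α := ℝ))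
    simpa using this.const_mul_atTop ha
  have hlim : Tendsto (fun t ↦ -exp (-a * t ^ 2) / (2 * a)) atBot (nhds 0) := by
    simpa using (tendsto_exp_atBot.comp hsq).neg.div_const (2 * a)
  simpa using integral_Iic_of_hasDerivAt_of_tendsto' (fun x _ ↦ hderiv x)
    (integrable_mul_exp_neg_mul_sq ha).integrableOn hlim

lemma exp_neg_sq_mul_erf_mul (r t : ℝ) :
    exp (-t ^ 2) * erf (r * t) = 2 / √π * ∫ u in 0..r, t * exp (-(1 + u ^ 2) * t ^ 2) := by
  have hsubst : ∫ s in 0..r * t, exp (-s ^ 2) = ∫ u in 0..r, t * exp (-(t * u) ^ 2) := by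
    rw [intervalIntegral.integral_const_mul, ← smul_eq_mul (a := t),
      smul_integral_comp_mul_left (fun s ↦ exp (-s ^ 2)) t]
    simp [mul_comm]
  rw [erf, hsubst, ← intervalIntegral.integral_const_mul, ← intervalIntegral.integral_const_mul,
    ← intervalIntegral.integral_const_mul]
  congr 1 with u
  rw [mul_left_comm (exp _), mul_left_comm (exp _), ← exp_add]
  ring_nf

lemma integrable_mul_exp_neg_one_add_sq_mul_sq (μ : Measure ℝ) [IsFiniteMeasure μ] (s : Set ℝ) :
    Integrable (Function.uncurry fun u t : ℝ ↦ t * exp (-(1 + u ^ 2) * t ^ 2))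
      (μ.prod (volume.restrict s)) := by
  have hgauss : Integrable (fun t : ℝ ↦ |t| * exp (-t ^ 2)) (volume.restrict s) := by
    refine Integrable.restrict ?_
    simpa [abs_mul] using (integrable_mul_exp_neg_mul_sq one_pos).abs
  refine ((integrable_const (μ := μ) (1 : ℝ)).mul_prod hgauss).mono (by fun_prop)
    (ae_of_all _ fun p ↦ ?_)
  simp only [Function.uncurry, norm_mul, norm_eq_abs, abs_exp, one_mul, abs_abs]
  gcongr
  nlinarith [sq_nonneg (p.1 * p.2)]

lemma integral_Iic_exp_neg_sq_mul_erf_mul (η r : ℝ) :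
    ∫ t in Iic η, exp (-t ^ 2) * erf (r * t)
      = -(1 / √π) * ∫ u in 0..r, exp (-(1 + u ^ 2) * η ^ 2) / (1 + u ^ 2) := by
  have : IsFiniteMeasure (volume.restrict (uIoc 0 r)) :=
    isFiniteMeasure_restrict.2 measure_Ioc_lt_top.ne
  simp_rw [exp_neg_sq_mul_erf_mul]
  rw [MeasureTheory.integral_const_mul, ← intervalIntegral_integral_swap
    (integrable_mul_exp_neg_one_add_sq_mul_sq _ _)]
  simp_rw [integral_Iic_mul_exp_neg_mul_sq (by positivity : (0 : ℝ) < 1 + _ ^ 2)]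
  rw [← intervalIntegral.integral_const_mul, ← intervalIntegral.integral_const_mul]
  congr 1 with u
  field_simp

lemma owenT_sqrt_two_mul (η r : ℝ) :
    owenT (√2 * η) r = 1 / (2 * π) * ∫ u in 0..r, exp (-(1 + u ^ 2) * η ^ 2) / (1 + u ^ 2) := by
  simp only [owenT, mul_pow, sq_sqrt zero_le_two]
  congr 2 with u
  congr 2
  ring

theorem erf_integral_owenT_general (η r : ℝ) :
    ∫ t in Set.Iic η, Real.exp (-t ^ 2) * erf (r * t)
      = -2 * Real.sqrt Real.pi * owenT (Real.sqrt 2 * η) r := by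
  rw [integral_Iic_exp_neg_sq_mul_erf_mul, owenT_sqrt_two_mul]
  generalize ∫ u in 0..r, exp (-(1 + u ^ 2) * η ^ 2) / (1 + u ^ 2) = I
  have hπ : √π * √π = π := mul_self_sqrt pi_pos.le
  field_simp
  linear_combination I * hπ

theorem erf_integral_owenT (η r : ℝ) (hr : 0 ≤ r) :
    ∫ t in Set.Iic η, Real.exp (-t ^ 2) * erf (r * t)
      = -2 * Real.sqrt Real.pi * owenT (Real.sqrt 2 * η) r :=
  erf_integral_owenT_general η r
end

section
/- Define Y(η, r) = (2/√π) ∫_0^η e^{-u²} erf(r u)² du. Then lim_{η→+∞} Y(η, r) = (2/π)·arcsin(r²/(1+r²)). -/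
open intervalIntegral Filter

/-- The function 𝓨(η, r). -/
noncomputable def Yfun (η r : ℝ) : ℝ :=
  (2 / Real.sqrt Real.pi) * ∫ u in (0 : ℝ)..η, Real.exp (-u ^ 2) * erf (r * u) ^ 2

/-! Let `F(r) = ∫₀^∞ e^{-u²} erf(ru)² du`, so that `Y(η, r) → (2/√π) F(r)`.
Differentiating under the integral sign, `F'(r) = (4/√π) ∫₀^∞ u e^{-(1+r²)u²} erf(ru) du`,
and an integration by parts against `d(e^{-au²})` turns this into a Gaussian integral:
`F'(r) = (2/√π) r / ((1+r²) √(1+2r²))`. Hence `(2/√π) F(r)` and `(2/π) arcsin(r²/(1+r²))`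
have the same derivative, and both vanish at `r = 0`. -/

open MeasureTheory Set Real Topology

lemma erf_zero : erf 0 = 0 := by simp [erf]

lemma continuous_exp_neg_sq : Continuous fun t : ℝ => exp (-t ^ 2) := by fun_prop

lemma hasDerivAt_erf (x : ℝ) : HasDerivAt erf (2 / √π * exp (-x ^ 2)) x :=
  (integral_hasDerivAt_right (continuous_exp_neg_sq.intervalIntegrable 0 x)
    (continuous_exp_neg_sq.stronglyMeasurableAtFilter _ _)
    continuous_exp_neg_sq.continuousAt).const_mul _

lemma hasDerivAt_erf_mul (b x : ℝ) :
    HasDerivAt (fun u => erf (b * u)) (2 / √π * exp (-(b * x) ^ 2) * b) x :=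
  ((hasDerivAt_erf (b * x)).comp x ((hasDerivAt_id' x).const_mul b)).congr_deriv (by rw [mul_one])

@[fun_prop]
lemma continuous_erf : Continuous erf :=
  continuous_iff_continuousAt.2 fun x => (hasDerivAt_erf x).continuousAt

lemma erf_neg (x : ℝ) : erf (-x) = -erf x := by
  have h := integral_comp_neg (a := 0) (b := x) fun t => exp (-t ^ 2)
  simp only [even_two, Even.neg_pow, neg_zero] at h
  rw [erf, erf, h, integral_symm, mul_neg]

lemma integral_exp_neg_sq_le {x : ℝ} (hx : 0 ≤ x) :
    ∫ t in (0 : ℝ)..x, exp (-t ^ 2) ≤ √π / 2 := by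
  have hint : IntegrableOn (fun t : ℝ => exp (-t ^ 2)) (Ioi 0) := by
    simpa using (integrable_exp_neg_mul_sq one_pos).integrableOn
  calc ∫ t in (0 : ℝ)..x, exp (-t ^ 2) = ∫ t in Ioc 0 x, exp (-t ^ 2) := integral_of_le hx
    _ ≤ ∫ t in Ioi 0, exp (-t ^ 2) :=
      setIntegral_mono_set hint (Eventually.of_forall fun t => by positivity)
        (Eventually.of_forall Ioc_subset_Ioi_self)
    _ = √π / 2 := by simpa using integral_gaussian_Ioi 1

lemma erf_nonneg {x : ℝ} (hx : 0 ≤ x) : 0 ≤ erf x :=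
  mul_nonneg (by positivity) (integral_nonneg hx fun t _ => by positivity)

lemma erf_le_one {x : ℝ} (hx : 0 ≤ x) : erf x ≤ 1 := by
  have hπ : 0 < √π := sqrt_pos.2 pi_pos
  calc erf x ≤ 2 / √π * (√π / 2) := by
        unfold erf; gcongr; exact integral_exp_neg_sq_le hx
    _ = 1 := by field_simp

lemma abs_erf_le_one (x : ℝ) : |erf x| ≤ 1 := by
  rcases le_total 0 x with hx | hx
  · rw [abs_of_nonneg (erf_nonneg hx)]
    exact erf_le_one hx
  · rw [← abs_neg, ← erf_neg, abs_of_nonneg (erf_nonneg (neg_nonneg.2 hx))]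
    exact erf_le_one (neg_nonneg.2 hx)

lemma integrable_mul_exp_neg_mul_sq_mul_erf {a : ℝ} (ha : 0 < a) (b : ℝ) :
    Integrable fun u : ℝ => u * exp (-a * u ^ 2) * erf (b * u) :=
  (integrable_mul_exp_neg_mul_sq ha).mul_bdd (by fun_prop)
    (Eventually.of_forall fun u => (norm_eq_abs _).trans_le (abs_erf_le_one _))

lemma hasDerivAt_exp_neg_mul_sq_mul_erf (a b x : ℝ) :
    HasDerivAt (fun u => exp (-a * u ^ 2) * erf (b * u))
      (-(2 * a) * (x * exp (-a * x ^ 2) * erf (b * x))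
        + 2 * b / √π * exp (-(a + b ^ 2) * x ^ 2)) x := by
  have hexp := ((hasDerivAt_pow 2 x).const_mul (-a)).exp
  refine (hexp.mul (hasDerivAt_erf_mul b x)).congr_deriv ?_
  rw [show -(a + b ^ 2) * x ^ 2 = -a * x ^ 2 + -(b * x) ^ 2 by ring, exp_add]
  push_cast
  ring

lemma tendsto_exp_neg_mul_sq_mul_erf {a : ℝ} (ha : 0 < a) (b : ℝ) :
    Tendsto (fun u => exp (-a * u ^ 2) * erf (b * u)) atTop (𝓝 0) := by
  have hexp : Tendsto (fun u => exp (-a * u ^ 2)) atTop (𝓝 0) := tendsto_exp_atBot.comp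
    ((tendsto_pow_atTop two_ne_zero).const_mul_atTop_of_neg (neg_neg_of_pos ha))
  exact hexp.zero_mul_isBoundedUnder_le
    (isBoundedUnder_of ⟨1, fun _ => (norm_eq_abs _).trans_le (abs_erf_le_one _)⟩)

lemma integral_mul_exp_neg_mul_sq_mul_erf {a : ℝ} (ha : 0 < a) (b : ℝ) :
    ∫ u in Ioi 0, u * exp (-a * u ^ 2) * erf (b * u) = b / (2 * a * √(a + b ^ 2)) := by
  have hab : 0 < a + b ^ 2 := by positivity
  have I1 := ((integrable_mul_exp_neg_mul_sq_mul_erf ha b).integrableOn (s := Ioi 0)).const_mul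
    (-(2 * a))
  have I2 := ((integrable_exp_neg_mul_sq hab).integrableOn (s := Ioi 0)).const_mul (2 * b / √π)
  have hFTC := integral_Ioi_of_hasDerivAt_of_tendsto'
    (fun x _ => hasDerivAt_exp_neg_mul_sq_mul_erf a b x) (I1.add I2)
    (tendsto_exp_neg_mul_sq_mul_erf ha b)
  rw [integral_add I1 I2, MeasureTheory.integral_const_mul, MeasureTheory.integral_const_mul,
    integral_gaussian_Ioi, sqrt_div pi_pos.le] at hFTC
  simp only [mul_zero, erf_zero, sub_zero] at hFTC
  set I := ∫ u in Ioi 0, u * exp (-a * u ^ 2) * erf (b * u)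
  have : √π ≠ 0 := by positivity
  have : √(a + b ^ 2) ≠ 0 := by positivity
  field_simp at hFTC ⊢
  linarith

noncomputable def gaussErfSqIntegral (r : ℝ) : ℝ :=
  ∫ u in Ioi 0, exp (-u ^ 2) * erf (r * u) ^ 2

lemma integrable_exp_neg_sq_mul_erf_sq (r : ℝ) :
    Integrable fun u : ℝ => exp (-u ^ 2) * erf (r * u) ^ 2 := by
  have hgauss : Integrable fun u : ℝ => exp (-u ^ 2) := by
    simpa using integrable_exp_neg_mul_sq one_pos
  refine hgauss.mul_bdd (c := 1) (by fun_prop) (Eventually.of_forall fun u => ?_)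
  rw [norm_pow, norm_eq_abs]
  exact pow_le_one₀ (abs_nonneg _) (abs_erf_le_one _)

lemma hasDerivAt_exp_neg_sq_mul_erf_sq (s u : ℝ) :
    HasDerivAt (fun s => exp (-u ^ 2) * erf (s * u) ^ 2)
      (4 / √π * (u * exp (-(1 + s ^ 2) * u ^ 2) * erf (s * u))) s := by
  have herf : HasDerivAt (fun s => erf (s * u)) (2 / √π * exp (-(s * u) ^ 2) * u) s := by
    simpa only [mul_comm _ u] using hasDerivAt_erf_mul u s
  refine ((herf.pow 2).const_mul (exp (-u ^ 2))).congr_deriv ?_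
  rw [show -(1 + s ^ 2) * u ^ 2 = -u ^ 2 + -(s * u) ^ 2 by ring, exp_add]
  push_cast
  ring

lemma norm_mul_exp_neg_mul_sq_mul_erf_le (s : ℝ) {u : ℝ} (hu : 0 < u) :
    ‖u * exp (-(1 + s ^ 2) * u ^ 2) * erf (s * u)‖ ≤ u * exp (-1 * u ^ 2) := by
  rw [norm_mul, norm_mul, norm_of_nonneg hu.le, norm_of_nonneg (exp_pos _).le, norm_eq_abs]
  calc u * exp (-(1 + s ^ 2) * u ^ 2) * |erf (s * u)| ≤ u * exp (-1 * u ^ 2) * 1 := by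
        gcongr
        · nlinarith [sq_nonneg s, sq_nonneg u]
        · exact abs_erf_le_one _
    _ = u * exp (-1 * u ^ 2) := mul_one _

lemma hasDerivAt_gaussErfSqIntegral (r : ℝ) :
    HasDerivAt gaussErfSqIntegral (2 / √π * (r / ((1 + r ^ 2) * √(1 + 2 * r ^ 2)))) r := by
  have key := _root_.hasDerivAt_integral_of_dominated_loc_of_deriv_le
    (μ := volume.restrict (Ioi 0)) (F := fun s u => exp (-u ^ 2) * erf (s * u) ^ 2)
    (F' := fun s u => 4 / √π * (u * exp (-(1 + s ^ 2) * u ^ 2) * erf (s * u)))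
    (bound := fun u => 4 / √π * (u * exp (-1 * u ^ 2))) (univ_mem (f := 𝓝 r))
    (Eventually.of_forall fun s => by fun_prop) (integrable_exp_neg_sq_mul_erf_sq r).integrableOn
    (by fun_prop)
    ((ae_restrict_mem measurableSet_Ioi).mono fun u hu s _ => by
      rw [norm_mul, norm_of_nonneg (by positivity)]
      exact mul_le_mul_of_nonneg_left (norm_mul_exp_neg_mul_sq_mul_erf_le s hu) (by positivity))
    (((integrable_mul_exp_neg_mul_sq one_pos).const_mul _).integrableOn)
    (Eventually.of_forall fun u s _ => hasDerivAt_exp_neg_sq_mul_erf_sq s u)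
  have hval := integral_mul_exp_neg_mul_sq_mul_erf (by positivity : (0 : ℝ) < 1 + r ^ 2) r
  rw [show 1 + r ^ 2 + r ^ 2 = 1 + 2 * r ^ 2 by ring] at hval
  refine key.2.congr_deriv ?_
  rw [MeasureTheory.integral_const_mul, hval]
  field_simp
  ring

lemma hasDerivAt_arcsin_sq_div_one_add_sq (r : ℝ) :
    HasDerivAt (fun s => arcsin (s ^ 2 / (1 + s ^ 2)))
      (2 * r / ((1 + r ^ 2) * √(1 + 2 * r ^ 2))) r := by
  have h1 : 0 < 1 + r ^ 2 := by positivity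
  have hlt : r ^ 2 / (1 + r ^ 2) < 1 := by rw [div_lt_one h1]; linarith
  have hnonneg : 0 ≤ r ^ 2 / (1 + r ^ 2) := by positivity
  have hquot := (hasDerivAt_pow 2 r).div ((hasDerivAt_pow 2 r).const_add 1) h1.ne'
  refine ((hasDerivAt_arcsin (by linarith) hlt.ne).comp r hquot).congr_deriv ?_
  have hsq : 1 - (r ^ 2 / (1 + r ^ 2)) ^ 2 = (1 + 2 * r ^ 2) / (1 + r ^ 2) ^ 2 := by
    field_simp
    ring
  rw [hsq, sqrt_div (by positivity), sqrt_sq h1.le]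
  have : √(1 + 2 * r ^ 2) ≠ 0 := by positivity
  field_simp
  push_cast
  ring

lemma gaussErfSqIntegral_eq (r : ℝ) :
    2 / √π * gaussErfSqIntegral r = 2 / π * arcsin (r ^ 2 / (1 + r ^ 2)) := by
  have hderiv : ∀ s, HasDerivAt
      (fun s => 2 / √π * gaussErfSqIntegral s - 2 / π * arcsin (s ^ 2 / (1 + s ^ 2))) 0 s := by
    intro s
    refine (((hasDerivAt_gaussErfSqIntegral s).const_mul _).sub
      ((hasDerivAt_arcsin_sq_div_one_add_sq s).const_mul _)).congr_deriv ?_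
    rw [← mul_assoc, div_mul_div_comm, mul_self_sqrt pi_pos.le]
    ring
  have hconst := is_const_of_deriv_eq_zero (fun s => (hderiv s).differentiableAt)
    (fun s => (hderiv s).deriv) r 0
  simpa [gaussErfSqIntegral, erf_zero, sub_eq_zero] using hconst

theorem Yfun_tendsto_general (r : ℝ) :
    Tendsto (fun η => Yfun η r) atTop
      (nhds ((2 / Real.pi) * Real.arcsin (r ^ 2 / (1 + r ^ 2)))) := by
  rw [← gaussErfSqIntegral_eq r]
  exact (intervalIntegral_tendsto_integral_Ioi 0
    (integrable_exp_neg_sq_mul_erf_sq r).integrableOn tendsto_id).const_mul _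

theorem Yfun_tendsto (r : ℝ) (hr : 0 ≤ r) :
    Tendsto (fun η => Yfun η r) atTop
      (nhds ((2 / Real.pi) * Real.arcsin (r ^ 2 / (1 + r ^ 2)))) :=
  Yfun_tendsto_general r
end
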